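/- arXiv:2301.01899 — 3 statements merged into one kernel-verified Lean document; each statement's English description precedes it below -/
import Mathlib

section
/- Let τ > 0, let μ : [q] → ℝ≥0 be a probability vector (a belief message), and let ŝ(r)(g) = α(r)(g)μ(g)/Σ_h α(r)(h)μ(h) with α the softmax of temperature τ², assuming the denominator is positive. Then every partial derivative of ŝ is bounded: |∂ŝ(r)(g)/∂r(h)| ≤ 1/(4τ²) for all g, h and all r. -/
/-- Softmax with temperature `τ²`. -/
noncomputable def softmaxT (q : ℕ) (τ : ℝ) (r : Fin q → ℝ) (g : Fin q) : ℝ :=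
  Real.exp (r g / τ ^ 2) / ∑ k, Real.exp (r k / τ ^ 2)

/-- Softmax reweighted by a fixed nonnegative vector `μ`. -/
noncomputable def reweightedSoftmax (q : ℕ) (τ : ℝ) (μ : Fin q → ℝ)
    (r : Fin q → ℝ) (g : Fin q) : ℝ :=
  softmaxT q τ r g * μ g / ∑ h, softmaxT q τ r h * μ h

/-! The reweighted softmax is the exponential tilt `p g ∝ exp (r g / τ²) μ g` of `μ`, whose Jacobian
is `τ⁻² (δ_gh p g - p g p h)`. As `p` is a probability vector, each entry is `τ⁻²` times either
`p g (1 - p g)` or `-p g p h` with `p g + p h ≤ 1`, and AM-GM bounds both by `1/4`. -/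

open Real Finset

section ExpTilt

variable {ι : Type*} [Fintype ι]

noncomputable def expTilt (c : ℝ) (w r : ι → ℝ) (g : ι) : ℝ :=
  exp (r g / c) * w g / ∑ k, exp (r k / c) * w k

theorem hasFDerivAt_exp_apply_div (c : ℝ) (k : ι) (r : ι → ℝ) :
    HasFDerivAt (fun r : ι → ℝ => exp (r k / c))
      ((exp (r k / c) / c) • ContinuousLinearMap.proj (R := ℝ) (φ := fun _ : ι => ℝ) k) r := by
  have hk : HasFDerivAt (fun r : ι → ℝ => r k)
      (ContinuousLinearMap.proj (R := ℝ) (φ := fun _ : ι => ℝ) k) r :=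
    hasFDerivAt_apply k r
  simpa [div_eq_mul_inv, smul_smul, mul_comm] using (hk.mul_const c⁻¹).exp

theorem fderiv_expTilt_apply {c : ℝ} {w r : ι → ℝ} (hZ : ∑ k, exp (r k / c) * w k ≠ 0)
    (g : ι) (v : ι → ℝ) :
    fderiv ℝ (fun r => expTilt c w r g) r v
      = c⁻¹ * expTilt c w r g * (v g - ∑ k, expTilt c w r k * v k) := by
  have hN : ∀ k, HasFDerivAt (fun r : ι → ℝ => exp (r k / c) * w k)
      (w k • (exp (r k / c) / c) • ContinuousLinearMap.proj (R := ℝ) (φ := fun _ : ι => ℝ) k) r :=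
    fun k => (hasFDerivAt_exp_apply_div c k r).mul_const (w k)
  have hq := (hN g).fun_mul ((hasDerivAt_inv hZ).comp_hasFDerivAt r (.fun_sum fun k _ => hN k))
  simp only [Function.comp_def] at hq
  simp only [expTilt, div_eq_mul_inv _ (∑ k, _)]
  rw [hq.fderiv]
  simp only [add_apply, smul_apply, _root_.sum_apply, ContinuousLinearMap.proj_apply, smul_eq_mul]
  set Z := ∑ k, exp (r k / c) * w k
  set S := ∑ k, exp (r k / c) * w k * v k
  have hS : ∑ k, w k * (exp (r k / c) / c * v k) = S / c := by
    rw [sum_div]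
    exact sum_congr rfl fun k _ => by ring
  have hS' : ∑ k, exp (r k / c) * w k * Z⁻¹ * v k = S / Z := by
    rw [sum_div]
    exact sum_congr rfl fun k _ => by ring
  rw [hS, hS']
  ring

theorem expTilt_nonneg {w : ι → ℝ} (hw : ∀ i, 0 ≤ w i) (c : ℝ) (r : ι → ℝ) (g : ι) :
    0 ≤ expTilt c w r g :=
  div_nonneg (mul_nonneg (exp_pos _).le (hw g))
    (sum_nonneg fun k _ => mul_nonneg (exp_pos _).le (hw k))

theorem sum_expTilt {c : ℝ} {w r : ι → ℝ} (hZ : ∑ k, exp (r k / c) * w k ≠ 0) :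
    ∑ g, expTilt c w r g = 1 := by
  simp only [expTilt]
  rw [← sum_div, div_self hZ]

end ExpTilt

theorem mul_le_quarter_of_add_le_one {a b : ℝ} (ha : 0 ≤ a) (hb : 0 ≤ b) (hab : a + b ≤ 1) :
    a * b ≤ 1 / 4 := by
  nlinarith [four_mul_le_sq_add a b]

theorem abs_mul_single_sub_le_quarter {ι : Type*} [Fintype ι] [DecidableEq ι] {p : ι → ℝ}
    (hp0 : ∀ i, 0 ≤ p i) (hp1 : ∑ i, p i = 1) (g h : ι) :
    |p g * ((Pi.single h 1 : ι → ℝ) g - p h)| ≤ 1 / 4 := by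
  have hle : ∀ s : Finset ι, ∑ i ∈ s, p i ≤ 1 := fun s =>
    hp1 ▸ sum_le_sum_of_subset_of_nonneg (subset_univ s) fun i _ _ => hp0 i
  rcases eq_or_ne g h with rfl | hgh
  · have hg1 : p g ≤ 1 := by simpa using hle {g}
    rw [Pi.single_eq_same, abs_of_nonneg (mul_nonneg (hp0 g) (by linarith))]
    exact mul_le_quarter_of_add_le_one (hp0 g) (by linarith) (by linarith)
  · have hgh1 : p g + p h ≤ 1 := by simpa [sum_pair hgh] using hle {g, h}
    rw [Pi.single_eq_of_ne hgh, zero_sub, mul_neg, abs_neg, abs_of_nonneg (mul_nonneg (hp0 g) (hp0 h))]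
    exact mul_le_quarter_of_add_le_one (hp0 g) (hp0 h) hgh1

theorem sum_softmaxT_mul (q : ℕ) (τ : ℝ) (μ r : Fin q → ℝ) :
    ∑ h, softmaxT q τ r h * μ h = (∑ k, exp (r k / τ ^ 2) * μ k) / ∑ k, exp (r k / τ ^ 2) := by
  simp only [softmaxT, div_mul_eq_mul_div, ← sum_div]

theorem reweightedSoftmax_eq_expTilt {q : ℕ} (τ : ℝ) (μ r : Fin q → ℝ) (g : Fin q) :
    reweightedSoftmax q τ μ r g = expTilt (τ ^ 2) μ r g := by
  have : Nonempty (Fin q) := ⟨g⟩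
  have hS : ∑ k, exp (r k / τ ^ 2) ≠ 0 := (sum_pos (fun k _ => exp_pos _) univ_nonempty).ne'
  simp only [reweightedSoftmax, softmaxT, expTilt, div_mul_eq_mul_div, ← sum_div]
  field_simp

theorem stmt_8_general (q : ℕ) (τ : ℝ) (μ : Fin q → ℝ)
    (hμnn : ∀ g, 0 ≤ μ g)
    (hden : ∀ r : Fin q → ℝ, 0 < ∑ h, softmaxT q τ r h * μ h)
    (r : Fin q → ℝ) (g h : Fin q) :
    |fderiv ℝ (fun r' : Fin q → ℝ => reweightedSoftmax q τ μ r' g) r (Pi.single h 1)|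
      ≤ 1 / (4 * τ ^ 2) := by
  have hZ : ∑ k, exp (r k / τ ^ 2) * μ k ≠ 0 := fun hZ =>
    (hden r).ne' (by rw [sum_softmaxT_mul, hZ, zero_div])
  simp_rw [reweightedSoftmax_eq_expTilt]
  rw [fderiv_expTilt_apply hZ]
  set p := expTilt (τ ^ 2) μ r
  have hsum : ∑ k, p k * (Pi.single h 1 : Fin q → ℝ) k = p h := by simp [Pi.single_apply]
  rw [hsum, mul_assoc, abs_mul, abs_of_nonneg (inv_nonneg.2 (sq_nonneg τ))]
  calc (τ ^ 2)⁻¹ * |p g * ((Pi.single h 1 : Fin q → ℝ) g - p h)| ≤ (τ ^ 2)⁻¹ * (1 / 4) := by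
        gcongr
        exact abs_mul_single_sub_le_quarter (expTilt_nonneg hμnn _ r) (sum_expTilt hZ) g h
    _ = 1 / (4 * τ ^ 2) := by ring

theorem stmt_8 (q : ℕ) (hq : 1 ≤ q) (τ : ℝ) (hτ : 0 < τ) (μ : Fin q → ℝ)
    (hμnn : ∀ g, 0 ≤ μ g) (hμsum : ∑ g, μ g = 1)
    (hden : ∀ r : Fin q → ℝ, 0 < ∑ h, softmaxT q τ r h * μ h)
    (r : Fin q → ℝ) (g h : Fin q) :
    |fderiv ℝ (fun r' : Fin q → ℝ => reweightedSoftmax q τ μ r' g) r (Pi.single h 1)|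
      ≤ 1 / (4 * τ ^ 2) :=
  stmt_8_general q τ μ hμnn hden r g h
end

section
/- Let τ > 0, let β : ℝ^q → ℝ^q be a differentiable map whose values are entrywise nonnegative with Σ_h β(r)(h)·w(h) > 0 for a fixed nonnegative vector w, and suppose ∂β(r)/∂t = (1/τ²)(ν − ‖ν‖₁·β(r)) for some direction t and some ν with 0 ≤ ν ≤ β(r). Define the normalized product m(r)(g) = β(r)(g)w(g)/Σ_h β(r)(h)w(h). Then ∂m(r)/∂t = (1/τ²)(ν' − ‖ν'‖₁·m(r)) where ν'(g) = ν(g)w(g)/Σ_h β(r)(h)w(h), and 0 ≤ ν' ≤ m(r) entrywise. -/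
/-!
By the quotient rule, the derivative of `m g = β g w g / S` with `S = Σ_h β h w h` is
`(β' g w g - m g · Σ_h β' h w h) / S`. Substituting `β' = c (ν - ‖ν‖₁ β)`, the two terms carrying
`‖ν‖₁` are `-c ‖ν‖₁ β g w g / S` and `+c ‖ν‖₁ m g`, which cancel; what is left is
`c (ν' g - ‖ν'‖₁ m g)` with `ν' = ν w / S`.
-/

section

variable {E : Type*} [NormedAddCommGroup E] [NormedSpace ℝ E] {ι : Type*} [Fintype ι]

theorem fderiv_fun_div_apply {a b : E → ℝ} {x : E} (ha : DifferentiableAt ℝ a x)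
    (hb : DifferentiableAt ℝ b x) (hx : b x ≠ 0) (t : E) :
    fderiv ℝ (fun y => a y / b y) x t
      = (fderiv ℝ a x t * b x - a x * fderiv ℝ b x t) / b x ^ 2 := by
  -- restrict to the line `s ↦ x + s • t`, where the one-variable quotient rule applies
  have hline : HasDerivAt (fun s : ℝ => x + s • t) t 0 := by
    simpa using ((hasDerivAt_id (0 : ℝ)).smul_const t).const_add x
  have hx0 : x = x + (0 : ℝ) • t := by simp
  have hdiv : DifferentiableAt ℝ (fun y => a y / b y) x := by
    simpa only [div_eq_mul_inv] using ha.fun_mul (hb.fun_inv hx)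
  have hquot := (ha.hasFDerivAt.comp_hasDerivAt_of_eq 0 hline hx0).fun_div
    (hb.hasFDerivAt.comp_hasDerivAt_of_eq 0 hline hx0) (by simpa using hx)
  simp only [Function.comp_def, zero_smul, add_zero] at hquot
  exact (hdiv.hasFDerivAt.comp_hasDerivAt_of_eq 0 hline hx0).unique hquot

theorem fderiv_normalizedProduct_apply {f : E → ι → ℝ} {x : E} (w : ι → ℝ)
    (hf : ∀ g, DifferentiableAt ℝ (fun r => f r g) x) (hS : ∑ h, f x h * w h ≠ 0)
    (t : E) (g : ι) :
    fderiv ℝ (fun r => f r g * w g / ∑ h, f r h * w h) x t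
      = (fderiv ℝ (fun r => f r g) x t * w g * ∑ h, f x h * w h
          - f x g * w g * ∑ h, fderiv ℝ (fun r => f r h) x t * w h)
        / (∑ h, f x h * w h) ^ 2 := by
  have hsum : DifferentiableAt ℝ (fun r => ∑ h, f r h * w h) x := by
    fun_prop
  rw [fderiv_fun_div_apply ((hf g).mul_const (w g)) hsum hS, fderiv_mul_const (hf g),
    fderiv_fun_sum fun h _ => (hf h).mul_const (w h)]
  simp only [_root_.sum_apply, smul_apply, smul_eq_mul,
    fderiv_mul_const (hf _), mul_comm (w _)]

theorem normalizedProduct_quotient_eq_canonical {b ν w db : ι → ℝ} (c : ℝ)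
    (hS : ∑ h, b h * w h ≠ 0) (hdb : ∀ g, db g = c * (ν g - (∑ k, ν k) * b g)) (g : ι) :
    (db g * w g * ∑ h, b h * w h - b g * w g * ∑ h, db h * w h) / (∑ h, b h * w h) ^ 2
      = c * (ν g * w g / ∑ h, b h * w h
          - (∑ k, ν k * w k / ∑ h, b h * w h) * (b g * w g / ∑ h, b h * w h)) := by
  have hdbw : ∑ h, db h * w h = c * ((∑ h, ν h * w h) - (∑ k, ν k) * ∑ h, b h * w h) := by
    simp only [hdb, mul_sub, sub_mul, Finset.sum_sub_distrib, Finset.mul_sum, mul_assoc]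
  rw [hdbw, hdb g, ← Finset.sum_div]
  field_simp
  ring

end

theorem stmt_14_general (q : ℕ) (τ : ℝ)
    (β : (Fin q → ℝ) → Fin q → ℝ) (w : Fin q → ℝ)
    (hβdiff : ∀ g, Differentiable ℝ (fun r => β r g))
    (hw : ∀ g, 0 ≤ w g)
    (hden : ∀ r, 0 < ∑ h, β r h * w h)
    (r₀ t : Fin q → ℝ) (ν : Fin q → ℝ)
    (hν : ∀ g, 0 ≤ ν g ∧ ν g ≤ β r₀ g)
    (hderiv : ∀ g, fderiv ℝ (fun r => β r g) r₀ t
      = (1 / τ ^ 2) * (ν g - (∑ k, ν k) * β r₀ g)) :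
    -- the normalized product `m r g = β r g * w g / Σ_h β r h * w h`
    -- has derivative in direction `t` of the same canonical form, with
    -- `ν' g = ν g * w g / Σ_h β r₀ h * w h` and `0 ≤ ν' ≤ m r₀`.
    (∀ g, fderiv ℝ (fun r => β r g * w g / ∑ h, β r h * w h) r₀ t
      = (1 / τ ^ 2) * ((ν g * w g / ∑ h, β r₀ h * w h)
          - (∑ k, ν k * w k / ∑ h, β r₀ h * w h)
            * (β r₀ g * w g / ∑ h, β r₀ h * w h))) ∧
    (∀ g, 0 ≤ ν g * w g / ∑ h, β r₀ h * w h ∧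
      ν g * w g / (∑ h, β r₀ h * w h) ≤ β r₀ g * w g / ∑ h, β r₀ h * w h) := by
  have hS := hden r₀
  refine ⟨fun g => ?_, fun g => ?_⟩
  · rw [fderiv_normalizedProduct_apply w (fun g => hβdiff g r₀) hS.ne' t g]
    exact normalizedProduct_quotient_eq_canonical _ hS.ne' hderiv g
  · obtain ⟨hν₀, hνβ⟩ := hν g
    have hwg := hw g
    exact ⟨by positivity, by gcongr⟩

theorem stmt_14 (q : ℕ) (τ : ℝ) (hτ : 0 < τ)
    (β : (Fin q → ℝ) → Fin q → ℝ) (w : Fin q → ℝ)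
    (hβdiff : ∀ g, Differentiable ℝ (fun r => β r g))
    (hβnn : ∀ r g, 0 ≤ β r g) (hw : ∀ g, 0 ≤ w g)
    (hden : ∀ r, 0 < ∑ h, β r h * w h)
    (r₀ t : Fin q → ℝ) (ν : Fin q → ℝ)
    (hν : ∀ g, 0 ≤ ν g ∧ ν g ≤ β r₀ g)
    (hderiv : ∀ g, fderiv ℝ (fun r => β r g) r₀ t
      = (1 / τ ^ 2) * (ν g - (∑ k, ν k) * β r₀ g)) :
    -- the normalized product `m r g = β r g * w g / Σ_h β r h * w h`
    -- has derivative in direction `t` of the same canonical form, with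
    -- `ν' g = ν g * w g / Σ_h β r₀ h * w h` and `0 ≤ ν' ≤ m r₀`.
    (∀ g, fderiv ℝ (fun r => β r g * w g / ∑ h, β r h * w h) r₀ t
      = (1 / τ ^ 2) * ((ν g * w g / ∑ h, β r₀ h * w h)
          - (∑ k, ν k * w k / ∑ h, β r₀ h * w h)
            * (β r₀ g * w g / ∑ h, β r₀ h * w h))) ∧
    (∀ g, 0 ≤ ν g * w g / ∑ h, β r₀ h * w h ∧
      ν g * w g / (∑ h, β r₀ h * w h) ≤ β r₀ g * w g / ∑ h, β r₀ h * w h) :=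
  stmt_14_general q τ β w hβdiff hw hden r₀ t ν hν hderiv
end

section
/- Let η : ℝ^{qL} → ℝ^{qL} act blockwise on L blocks of size q, with the ℓ-th block given by ŝ_ℓ(r) = (softmax reweighted by a fixed positive probability vector μ_ℓ of the ℓ-th block r_ℓ, temperature τ²). Then the divergence of η equals (1/τ²)(‖η(r)‖₁ − ‖η(r)‖²), where ‖·‖₁ and ‖·‖ are the ℓ¹ and Euclidean norms on ℝ^{qL}. -/
/-!
Within block `ℓ` the denoiser is the weighted softmax `s g = exp (c x g) μ g / ∑ h, exp (c x h) μ h`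
of `x = r (ℓ, ·)` with `c = τ⁻²` (the normaliser of `α` cancels). Its Jacobian is
`c s g (δ g h - s h)`, so each diagonal entry is `c (s g - s g ²)`; summing over all coordinates
gives the claim, because `η > 0` makes `‖η‖₁ = ∑ η`.
-/

/-- Softmax of block `ℓ` with temperature `τ²` for a blockwise signal. -/
noncomputable def blockSoftmax (q L : ℕ) (τ : ℝ) (r : Fin L × Fin q → ℝ)
    (ℓ : Fin L) (g : Fin q) : ℝ :=
  Real.exp (r (ℓ, g) / τ ^ 2) / ∑ k, Real.exp (r (ℓ, k) / τ ^ 2)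

/-- Blockwise reweighted-softmax denoiser. -/
noncomputable def blockDenoiser (q L : ℕ) (τ : ℝ) (μ : Fin L → Fin q → ℝ)
    (r : Fin L × Fin q → ℝ) (p : Fin L × Fin q) : ℝ :=
  blockSoftmax q L τ r p.1 p.2 * μ p.1 p.2 /
    ∑ h, blockSoftmax q L τ r p.1 h * μ p.1 h

open Finset
open ContinuousLinearMap (proj proj_apply)

noncomputable def weightedSoftmax {ι : Type*} [Fintype ι] (c : ℝ) (w x : ι → ℝ) (i : ι) : ℝ :=
  Real.exp (c * x i) * w i / ∑ j, Real.exp (c * x j) * w j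

section
variable {ι : Type*} [Fintype ι] (c : ℝ) {w : ι → ℝ} (x : ι → ℝ)

theorem weightedSoftmax_pos (hw : ∀ j, 0 < w j) (i : ι) : 0 < weightedSoftmax c w x i :=
  div_pos (mul_pos (Real.exp_pos _) (hw i))
    (sum_pos (fun j _ => mul_pos (Real.exp_pos _) (hw j)) ⟨i, mem_univ i⟩)

theorem hasFDerivAt_weightedSoftmax (hw : ∀ j, 0 < w j) (i : ι) :
    HasFDerivAt (fun x => weightedSoftmax c w x i)
      (c • weightedSoftmax c w x i •
        (proj i - ∑ j, weightedSoftmax c w x j • proj (R := ℝ) (φ := fun _ : ι => ℝ) j)) x := by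
  set N : ι → (ι → ℝ) → ℝ := fun j x => Real.exp (c * x j) * w j
  have hN : ∀ j, HasFDerivAt (N j) ((c * N j x) • proj j) x := fun j => by
    refine ((hasFDerivAt_apply j x).const_mul c).exp.mul_const (w j) |>.congr_fderiv ?_
    ext v
    simp only [N, smul_apply, proj_apply, smul_eq_mul]
    rw [FunLike.coe_smul, Pi.smul_apply, proj_apply, smul_eq_mul]
    ring
  set Z := ∑ j, N j x with hZdef
  have hZ : 0 < Z := sum_pos (fun j _ => mul_pos (Real.exp_pos _) (hw j)) ⟨i, mem_univ i⟩
  have hs : ∀ j, weightedSoftmax c w x j = N j x / Z := fun j => rfl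
  refine (hN i).mul ((hasDerivAt_inv hZ.ne').comp_hasFDerivAt x
    (HasFDerivAt.fun_sum fun j _ => hN j)) |>.congr_fderiv ?_
  ext v
  simp only [← hZdef, hs, add_apply, sub_apply, smul_apply, _root_.sum_apply, proj_apply,
    smul_eq_mul, Function.comp_apply]
  simp only [div_mul_eq_mul_div, ← sum_div, mul_assoc, ← mul_sum]
  field_simp
  ring

theorem fderiv_weightedSoftmax_apply_single_self [DecidableEq ι] (hw : ∀ j, 0 < w j) (i : ι) :
    fderiv ℝ (fun x => weightedSoftmax c w x i) x (Pi.single i 1) =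
      c * (weightedSoftmax c w x i - weightedSoftmax c w x i ^ 2) := by
  rw [(hasFDerivAt_weightedSoftmax c x hw i).fderiv]
  simp only [smul_apply, sub_apply, _root_.sum_apply, proj_apply, smul_eq_mul,
    Pi.single_apply, mul_ite, mul_one, mul_zero, sum_ite_eq', mem_univ, if_true]
  ring

end

theorem blockDenoiser_eq_weightedSoftmax (q L : ℕ) (τ : ℝ) (μ : Fin L → Fin q → ℝ)
    (r : Fin L × Fin q → ℝ) (ℓ : Fin L) (g : Fin q) :
    blockDenoiser q L τ μ r (ℓ, g) = weightedSoftmax (τ ^ 2)⁻¹ (μ ℓ) (fun h => r (ℓ, h)) g := by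
  have hZ : 0 < ∑ k, Real.exp (r (ℓ, k) / τ ^ 2) :=
    sum_pos (fun k _ => Real.exp_pos _) ⟨g, mem_univ g⟩
  simp only [blockDenoiser, blockSoftmax, weightedSoftmax, div_mul_eq_mul_div, ← sum_div,
    inv_mul_eq_div]
  field_simp

theorem fderiv_blockDenoiser_apply_single_self (q L : ℕ) (τ : ℝ) (μ : Fin L → Fin q → ℝ)
    (r : Fin L × Fin q → ℝ) (ℓ : Fin L) (hμ : ∀ g, 0 < μ ℓ g) (g : Fin q) :
    fderiv ℝ (fun r' => blockDenoiser q L τ μ r' (ℓ, g)) r (Pi.single (ℓ, g) 1) =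
      (τ ^ 2)⁻¹ * (blockDenoiser q L τ μ r (ℓ, g) - blockDenoiser q L τ μ r (ℓ, g) ^ 2) := by
  let R : (Fin L × Fin q → ℝ) →L[ℝ] Fin q → ℝ :=
    ContinuousLinearMap.pi fun h => proj (ℓ, h)
  have hR : R (Pi.single (ℓ, g) 1) = Pi.single g 1 := by
    ext h; simp [R, Pi.single_apply]
  simp only [blockDenoiser_eq_weightedSoftmax]
  change fderiv ℝ ((fun x => weightedSoftmax (τ ^ 2)⁻¹ (μ ℓ) x g) ∘ R) r _ = _
  rw [fderiv_comp r (hasFDerivAt_weightedSoftmax _ _ hμ g).differentiableAt R.differentiableAt,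
    R.fderiv, ContinuousLinearMap.comp_apply, hR]
  exact fderiv_weightedSoftmax_apply_single_self _ _ hμ g

theorem stmt_18_general (q L : ℕ) (τ : ℝ)
    (μ : Fin L → Fin q → ℝ) (hμpos : ∀ ℓ g, 0 < μ ℓ g)
    (r : Fin L × Fin q → ℝ) :
    (∑ ℓ, ∑ g, fderiv ℝ (fun r' => blockDenoiser q L τ μ r' (ℓ, g)) r
        (Pi.single (ℓ, g) 1))
      = (1 / τ ^ 2) * ((∑ p, |blockDenoiser q L τ μ r p|)
          - ∑ p, (blockDenoiser q L τ μ r p) ^ 2) := by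
  have hpos (p : Fin L × Fin q) : 0 < blockDenoiser q L τ μ r p := by
    rw [blockDenoiser_eq_weightedSoftmax]
    exact weightedSoftmax_pos _ _ (hμpos p.1) p.2
  simp only [fderiv_blockDenoiser_apply_single_self q L τ μ r _ (hμpos _), abs_of_pos (hpos _),
    ← Fintype.sum_prod_type', one_div, mul_sub, mul_sum, sum_sub_distrib]

theorem stmt_18 (q L : ℕ) (hq : 1 ≤ q) (τ : ℝ) (hτ : 0 < τ)
    (μ : Fin L → Fin q → ℝ) (hμpos : ∀ ℓ g, 0 < μ ℓ g)
    (hμsum : ∀ ℓ, ∑ g, μ ℓ g = 1) (r : Fin L × Fin q → ℝ) :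
    (∑ ℓ, ∑ g, fderiv ℝ (fun r' => blockDenoiser q L τ μ r' (ℓ, g)) r
        (Pi.single (ℓ, g) 1))
      = (1 / τ ^ 2) * ((∑ p, |blockDenoiser q L τ μ r p|)
          - ∑ p, (blockDenoiser q L τ μ r p) ^ 2) :=
  stmt_18_general q L τ μ hμpos r
end
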